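/- Let S = ⟨n₁, …, n_k⟩ with 2 ≤ n₁ < ⋯ < n_k minimally generating S and k ≥ 2. Then S is not fully elastic: there exists a rational q with 1 ≤ q < n_k/n₁ such that no nonzero n ∈ S has ρ(n) = q. -/

import Mathlib

/-- The set of factorization lengths of `n` over the generators `gens`. -/
def lenSet (k : ℕ) (gens : Fin k → ℕ) (n : ℕ) : Set ℕ :=
  {l | ∃ x : Fin k → ℕ, n = ∑ i, x i * gens i ∧ l = ∑ i, x i}

/-- The elasticity ρ(n) = L(n)/ℓ(n) of `n`, as a rational number. -/
noncomputable def rho (k : ℕ) (gens : Fin k → ℕ) (n : ℕ) : ℚ :=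
  ((sSup (lenSet k gens n) : ℕ) : ℚ) / ((sInf (lenSet k gens n) : ℕ) : ℚ)

/-!
For `q = (b + 1) / b` with `b` large, `ρ(n) = q` forces `L(n) = (b + 1) t` and `ℓ(n) = b t`
for some `t ≥ 1`. But reducing all coordinates but one of a factorization of `n` modulo
`n₁` (resp. `n_k`) shows `n ≤ L(n) n₁ + D` and `ℓ(n) n_k ≤ n + D` with `D = k n_k²`
independent of `n`, so `b t n_k ≤ (b + 1) t n₁ + 2D`, which fails once `b > n₁ + 2D`.
-/

open Finset

section Lengths

variable {k : ℕ} (gens : Fin k → ℕ)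

theorem exists_factorization_lt_of_ne {j : Fin k} (hj : 0 < gens j) (x : Fin k → ℕ) :
    ∃ y : Fin k → ℕ, ∑ i, y i * gens i = ∑ i, x i * gens i ∧ ∀ i ≠ j, y i < gens j := by
  refine ⟨fun i => x i % gens j + if i = j then ∑ i', x i' / gens j * gens i' else 0, ?_,
    fun i hi => by simpa [hi] using Nat.mod_lt _ hj⟩
  simp only [add_mul, sum_add_distrib, ite_mul, zero_mul, sum_ite_eq', mem_univ, if_true]
  rw [sum_mul, ← sum_add_distrib]
  refine sum_congr rfl fun i _ => ?_
  conv_rhs => rw [← Nat.mod_add_div (x i) (gens j)]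
  ring

theorem exists_mem_lenSet_abs_sub_le {n : ℕ} (hn : n ∈ AddSubmonoid.closure (Set.range gens))
    {j : Fin k} (hj : 0 < gens j) {M : ℕ} (hM : ∀ i, gens i ≤ M) :
    ∃ l ∈ lenSet k gens n, |(n : ℤ) - l * gens j| ≤ k * M * M := by
  obtain ⟨x, rfl⟩ := AddSubmonoid.mem_closure_range_iff_of_fintype.mp hn
  obtain ⟨y, hy, hlt⟩ := exists_factorization_lt_of_ne gens hj x
  refine ⟨∑ i, y i, ⟨y, by simp [hy], rfl⟩, ?_⟩
  have hterm : ∀ i, |(y i : ℤ) * (gens i - gens j)| ≤ M * M := by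
    intro i
    rcases eq_or_ne i j with rfl | hij
    · simp [mul_self_nonneg]
    rw [abs_mul, Nat.abs_cast]
    have hyM : (y i : ℤ) ≤ M := by exact_mod_cast (hlt i hij).le.trans (hM j)
    have hdiff : |(gens i - gens j : ℤ)| ≤ M :=
      abs_sub_le_of_nonneg_of_le (by positivity) (by exact_mod_cast hM i) (by positivity)
        (by exact_mod_cast hM j)
    exact mul_le_mul hyM hdiff (abs_nonneg _) (by positivity)
  calc |((∑ i, x i • gens i : ℕ) : ℤ) - ((∑ i, y i : ℕ) : ℤ) * gens j|
      = |∑ i, (y i : ℤ) * (gens i - gens j)| := by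
        simp only [smul_eq_mul, ← hy]
        push_cast
        rw [sum_mul, ← sum_sub_distrib]
        simp only [mul_sub]
    _ ≤ ∑ i, |(y i : ℤ) * (gens i - gens j)| := abs_sum_le_sum_abs _ _
    _ ≤ ∑ _i : Fin k, (M * M : ℤ) := sum_le_sum fun i _ => hterm i
    _ = k * M * M := by simp [mul_assoc]

theorem bddAbove_lenSet (hpos : ∀ i, 0 < gens i) (n : ℕ) : BddAbove (lenSet k gens n) := by
  refine ⟨n, ?_⟩
  rintro _ ⟨x, rfl, rfl⟩
  exact sum_le_sum fun i _ => Nat.le_mul_of_pos_right (x i) (hpos i)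

theorem le_sSup_lenSet_mul_add {n : ℕ} (hn : n ∈ AddSubmonoid.closure (Set.range gens))
    {M : ℕ} (hM : ∀ i, gens i ≤ M) (hpos : ∀ i, 0 < gens i) (j : Fin k) :
    n ≤ sSup (lenSet k gens n) * gens j + k * M * M := by
  obtain ⟨l, hl, hnear⟩ := exists_mem_lenSet_abs_sub_le gens hn (hpos j) hM
  have hlL : l * gens j ≤ sSup (lenSet k gens n) * gens j :=
    Nat.mul_le_mul_right _ (le_csSup (bddAbove_lenSet gens hpos n) hl)
  have hnl := (abs_le.mp hnear).2
  zify at hlL ⊢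
  linarith

theorem sInf_lenSet_mul_le_add {n : ℕ} (hn : n ∈ AddSubmonoid.closure (Set.range gens))
    {M : ℕ} (hM : ∀ i, gens i ≤ M) {j : Fin k} (hj : 0 < gens j) :
    sInf (lenSet k gens n) * gens j ≤ n + k * M * M := by
  obtain ⟨l, hl, hnear⟩ := exists_mem_lenSet_abs_sub_le gens hn hj hM
  have hlL : sInf (lenSet k gens n) * gens j ≤ l * gens j :=
    Nat.mul_le_mul_right _ (Nat.sInf_le hl)
  have hln := (abs_le.mp hnear).1
  zify at hlL ⊢
  linarith

end Lengths

theorem exists_eq_mul_of_div_eq_succ_div {a c b : ℕ} (hb : b ≠ 0)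
    (h : (a : ℚ) / c = (b + 1) / b) : ∃ t, 0 < t ∧ a = (b + 1) * t ∧ c = b * t := by
  have hc : c ≠ 0 := by
    rintro rfl
    rw [Nat.cast_zero, div_zero, eq_comm] at h
    exact absurd h (by positivity)
  have hcross : a * b = (b + 1) * c := by
    rw [div_eq_div_iff (by exact_mod_cast hc) (by exact_mod_cast hb)] at h
    exact_mod_cast h
  obtain ⟨t, rfl⟩ : b ∣ c :=
    (Nat.coprime_self_add_right.mpr (Nat.coprime_one_right b)).dvd_of_dvd_mul_left
      ⟨a, by linarith⟩
  refine ⟨t, Nat.pos_of_ne_zero (right_ne_zero_of_mul hc), ?_, rfl⟩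
  exact Nat.eq_of_mul_eq_mul_right (Nat.pos_of_ne_zero hb) (by rw [hcross]; ring)

theorem rho_ne_succ_div {k : ℕ} (gens : Fin k → ℕ) {i j : Fin k} (hpos : 0 < gens i)
    (hi : ∀ l, gens i ≤ gens l) (hj : ∀ l, gens l ≤ gens j) (hij : gens i < gens j) {b : ℕ}
    (hb : gens i + 2 * (k * gens j * gens j) < b) {n : ℕ}
    (hn : n ∈ AddSubmonoid.closure (Set.range gens)) :
    rho k gens n ≠ (b + 1) / b := by
  intro h
  obtain ⟨t, ht, hL, hl⟩ := exists_eq_mul_of_div_eq_succ_div (by omega) h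
  have hupper := le_sSup_lenSet_mul_add gens hn hj (fun l => hpos.trans_le (hi l)) i
  have hlower := sInf_lenSet_mul_le_add gens hn hj (hpos.trans hij)
  rw [hL] at hupper
  rw [hl] at hlower
  have hgap : b * t * (gens i + 1) ≤ b * t * gens j := Nat.mul_le_mul_left _ hij
  have hbt : (gens i + 2 * (k * gens j * gens j) + 1) * t ≤ b * t := Nat.mul_le_mul_right _ hb
  have hDt : k * gens j * gens j ≤ k * gens j * gens j * t := Nat.le_mul_of_pos_right _ ht
  nlinarith

/-- A minimally generated numerical semigroup S = ⟨n₁ < ⋯ < n_k⟩ with 2 ≤ n₁ and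
k ≥ 2 is not fully elastic: some rational q ∈ [1, n_k/n₁) is not the elasticity of
any nonzero element of S. -/
theorem stmt_12 (k : ℕ) (hk : 2 ≤ k) (gens : Fin k → ℕ)
    (hmono : StrictMono gens) (h2 : 2 ≤ gens ⟨0, by omega⟩) :
    ∃ q : ℚ, 1 ≤ q ∧ q < (gens ⟨k - 1, by omega⟩ : ℚ) / (gens ⟨0, by omega⟩ : ℚ) ∧
      ∀ n : ℕ, n ≠ 0 → n ∈ AddSubmonoid.closure (Set.range gens) →
        rho k gens n ≠ q := by
  set i₀ : Fin k := ⟨0, by omega⟩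
  set i₁ : Fin k := ⟨k - 1, by omega⟩
  have hm : ∀ l, gens i₀ ≤ gens l := fun l => hmono.monotone (Fin.mk_le_mk.mpr l.val.zero_le)
  have hM : ∀ l, gens l ≤ gens i₁ := fun l => hmono.monotone (Fin.mk_le_mk.mpr (by omega))
  have hmM : gens i₀ < gens i₁ := hmono (Fin.mk_lt_mk.mpr (by omega))
  obtain ⟨b, hb⟩ : ∃ b, b = gens i₀ + 2 * (k * gens i₁ * gens i₁) + 1 := ⟨_, rfl⟩
  have hb0 : (0 : ℚ) < b := by exact_mod_cast (show 0 < b by omega)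
  refine ⟨(b + 1) / b, ?_, ?_, fun n _ hn => rho_ne_succ_div gens (by omega) hm hM hmM
    (by omega) hn⟩
  · rw [le_div_iff₀ hb0]
    linarith
  · rw [div_lt_div_iff₀ hb0 (by positivity)]
    have hgap : (gens i₀ + 1) * b ≤ gens i₁ * b := Nat.mul_le_mul_right _ hmM
    have hcross : (b + 1) * gens i₀ < gens i₁ * b := by nlinarith [show gens i₀ < b by omega]
    exact_mod_cast hcross
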